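/- arXiv:1101.3188 — 5 statements merged into one kernel-verified Lean document; each statement's English description precedes it below -/
import Mathlib

section
/- Let G be a simple triangle-free graph on n ≥ 3 vertices such that G has no perfect matching and the minimum degree of G is at least (n-1)/2. Then the number of vertices n is odd. -/
/-!
If `n` is even, the degree bound reads `δ(G) ≥ n / 2`. For an edge `uv` of a triangle-free graph
the neighbourhoods `N(u)` and `N(v)` are disjoint, so they both have exactly `n / 2` vertices and
partition `V`. The same argument applied to an edge `va` with `a ∈ N(v)` shows `N(a) = N(u)`, so
`G` contains every edge between `N(v)` and `N(u)`; any bijection `N(v) ≃ N(u)` is then a perfect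
matching.
-/

lemma Nat.le_two_mul_of_even_of_sub_one_div_two_le {n d : ℕ} (hn : Even n)
    (h : ((n : ℝ) - 1) / 2 ≤ d) : n ≤ 2 * d := by
  have hlt : n < 2 * d + 2 := by
    have : (n : ℝ) < 2 * d + 2 := by linarith
    exact_mod_cast this
  obtain ⟨k, rfl⟩ := hn
  omega

namespace SimpleGraph

variable {V : Type*} [Fintype V] {G : SimpleGraph V} [DecidableRel G.Adj]

lemma disjoint_neighborFinset_of_cliqueFree_three (hG : G.CliqueFree 3) {u v : V}
    (huv : G.Adj u v) : Disjoint (G.neighborFinset u) (G.neighborFinset v) := by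
  classical
  rw [Finset.disjoint_left]
  intro w hu hv
  rw [mem_neighborFinset] at hu hv
  exact hG {u, v, w} (is3Clique_triple_iff.mpr ⟨huv, hu, hv⟩)

lemma neighborFinset_union_eq_univ_of_cliqueFree_three [DecidableEq V] (hG : G.CliqueFree 3)
    {u v : V} (huv : G.Adj u v) (hdeg : Fintype.card V ≤ G.degree u + G.degree v) :
    G.neighborFinset u ∪ G.neighborFinset v = Finset.univ := by
  apply Finset.eq_univ_of_card
  refine (Finset.card_le_univ _).antisymm ?_
  rwa [Finset.card_union_of_disjoint (disjoint_neighborFinset_of_cliqueFree_three hG huv),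
    card_neighborFinset_eq_degree, card_neighborFinset_eq_degree]

lemma adj_of_cliqueFree_three_of_le_two_mul_degree (hG : G.CliqueFree 3)
    (hdeg : ∀ w, Fintype.card V ≤ 2 * G.degree w) {u v a b : V} (huv : G.Adj u v)
    (hva : G.Adj v a) (hub : G.Adj u b) : G.Adj a b := by
  classical
  have hcover := neighborFinset_union_eq_univ_of_cliqueFree_three hG hva.symm
    (by have := hdeg a; have := hdeg v; omega)
  have hbv : b ∉ G.neighborFinset v := Finset.disjoint_left.mp
    (disjoint_neighborFinset_of_cliqueFree_three hG huv) ((mem_neighborFinset _ _ _).mpr hub)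
  have hb : b ∈ G.neighborFinset a ∪ G.neighborFinset v := hcover ▸ Finset.mem_univ b
  simpa only [Finset.mem_union, hbv, or_false, mem_neighborFinset] using hb

theorem exists_isPerfectMatching_of_cliqueFree_three [Nonempty V] (hG : G.CliqueFree 3)
    (hdeg : ∀ w, Fintype.card V ≤ 2 * G.degree w) : ∃ M : G.Subgraph, M.IsPerfectMatching := by
  classical
  obtain ⟨u⟩ := ‹Nonempty V›
  obtain ⟨v, huv⟩ := (G.degree_pos_iff_exists_adj u).mp
    (by have := hdeg u; have := Fintype.card_pos (α := V); omega)
  have hdisj := disjoint_neighborFinset_of_cliqueFree_three hG huv.symm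
  have hcover := neighborFinset_union_eq_univ_of_cliqueFree_three hG huv.symm
    (by have := hdeg u; have := hdeg v; omega)
  have hdeg_eq : G.degree v = G.degree u := by
    have := Finset.card_union_of_disjoint hdisj
    rw [hcover, Finset.card_univ, card_neighborFinset_eq_degree,
      card_neighborFinset_eq_degree] at this
    have := hdeg u; have := hdeg v; omega
  let e : G.neighborSet v ≃ G.neighborSet u :=
    Fintype.equivOfCardEq (by rw [card_neighborSet_eq_degree, card_neighborSet_eq_degree, hdeg_eq])
  obtain ⟨M, hverts, hM⟩ := Subgraph.IsMatching.exists_of_disjoint_sets_of_equiv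
    (by simpa only [← coe_neighborFinset] using Finset.disjoint_coe.mpr hdisj) e
    fun a ↦ adj_of_cliqueFree_three_of_le_two_mul_degree hG hdeg huv a.2 (e a).2
  refine ⟨M, hM, ?_⟩
  rw [Subgraph.isSpanning_iff, hverts]
  simpa only [Finset.coe_union, coe_neighborFinset, Finset.coe_univ] using
    congrArg ((↑) : Finset V → Set V) hcover

end SimpleGraph

theorem stmt_1_general {V : Type*} [Fintype V]
    (G : SimpleGraph V) [DecidableRel G.Adj]
    (hn : 3 ≤ Fintype.card V)
    (htf : G.CliqueFree 3)
    (hpm : ¬ ∃ M : G.Subgraph, M.IsPerfectMatching)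
    (hdeg : ∀ v : V, ((Fintype.card V : ℝ) - 1) / 2 ≤ G.degree v) :
    Odd (Fintype.card V) := by
  have : Nonempty V := Fintype.card_pos_iff.mp (by omega)
  by_contra hodd
  have heven : Even (Fintype.card V) := Nat.not_odd_iff_even.mp hodd
  exact hpm <| G.exists_isPerfectMatching_of_cliqueFree_three htf fun w ↦
    Nat.le_two_mul_of_even_of_sub_one_div_two_le heven (hdeg w)

/-- A triangle-free graph on `n ≥ 3` vertices without a perfect matching and with
minimum degree at least `(n-1)/2` has an odd number of vertices. -/
theorem stmt_1 {V : Type*} [Fintype V] [DecidableEq V]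
    (G : SimpleGraph V) [DecidableRel G.Adj]
    (hn : 3 ≤ Fintype.card V)
    (htf : G.CliqueFree 3)
    (hpm : ¬ ∃ M : G.Subgraph, M.IsPerfectMatching)
    (hdeg : ∀ v : V, ((Fintype.card V : ℝ) - 1) / 2 ≤ G.degree v) :
    Odd (Fintype.card V) :=
  stmt_1_general G hn htf hpm hdeg
end

section
/- Let G be a simple triangle-free graph on n ≥ 3 vertices with n odd, minimum degree at least (n-1)/2, and maximum degree equal to (n+1)/2. Then G is isomorphic to the complete bipartite graph K_{(n-1)/2,(n+1)/2}. -/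
/-- A triangle-free graph on an odd number `n ≥ 3` of vertices with minimum degree at
least `(n-1)/2` and maximum degree exactly `(n+1)/2` is isomorphic to
`K_{(n-1)/2,(n+1)/2}`. -/
theorem stmt_3 {V : Type*} [Fintype V] [DecidableEq V]
    (G : SimpleGraph V) [DecidableRel G.Adj]
    (hn : 3 ≤ Fintype.card V) (hodd : Odd (Fintype.card V))
    (htf : G.CliqueFree 3)
    (hdeg : ∀ v : V, ((Fintype.card V : ℝ) - 1) / 2 ≤ G.degree v)
    (hmax : G.maxDegree = (Fintype.card V + 1) / 2) :
    Nonempty (G ≃g completeBipartiteGraph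
      (Fin ((Fintype.card V - 1) / 2)) (Fin ((Fintype.card V + 1) / 2))) := by
  obtain ⟨k, hk⟩ := hodd
  have h1 : (Fintype.card V - 1) / 2 = k := by omega
  have h2 : (Fintype.card V + 1) / 2 = k + 1 := by omega
  rw [h1, h2]
  have hne : Nonempty V := by
    rw [← Fintype.card_pos_iff]; omega
  -- integer min-degree bound
  have hdeg' : ∀ u : V, k ≤ G.degree u := by
    intro u
    have h := hdeg u
    rw [hk] at h
    have : (k : ℝ) ≤ G.degree u := by push_cast at h ⊢; linarith
    exact_mod_cast this
  obtain ⟨v₀, hv₀⟩ := G.exists_maximal_degree_vertex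
  rw [hmax, h2] at hv₀
  set A : Finset V := G.neighborFinset v₀ with hAdef
  have hA : A.card = k + 1 := by
    rw [hAdef, G.card_neighborFinset_eq_degree, ← hv₀]
  have hAc : Aᶜ.card = k := by
    rw [Finset.card_compl, hA]; omega
  -- every vertex of A has neighborhood exactly Aᶜ
  have hnbr : ∀ a ∈ A, G.neighborFinset a = Aᶜ := by
    intro a ha
    apply Finset.eq_of_subset_of_card_le
    · intro w hw
      rw [Finset.mem_compl]
      intro hwA
      rw [hAdef, SimpleGraph.mem_neighborFinset] at ha hwA
      rw [SimpleGraph.mem_neighborFinset] at hw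
      exact htf {v₀, a, w} (SimpleGraph.is3Clique_triple_iff.mpr ⟨ha, hwA, hw⟩)
    · rw [hAc, G.card_neighborFinset_eq_degree]; exact hdeg' a
  -- adjacency characterization
  have hAdj : ∀ u w : V, G.Adj u w ↔ (u ∈ A ∧ w ∉ A) ∨ (u ∉ A ∧ w ∈ A) := by
    intro u w
    constructor
    · intro huw
      by_cases hu : u ∈ A
      · left
        refine ⟨hu, ?_⟩
        have := hnbr u hu
        have hw : w ∈ Aᶜ := by
          rw [← this, SimpleGraph.mem_neighborFinset]; exact huw
        exact Finset.mem_compl.mp hw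
      · right
        refine ⟨hu, ?_⟩
        by_contra hw
        obtain ⟨a, ha⟩ := Finset.card_pos.mp (by omega : 0 < A.card)
        have hna := hnbr a ha
        have hau : G.Adj a u := by
          rw [← SimpleGraph.mem_neighborFinset, hna, Finset.mem_compl]; exact hu
        have haw : G.Adj a w := by
          rw [← SimpleGraph.mem_neighborFinset, hna, Finset.mem_compl]; exact hw
        exact htf {a, u, w} (SimpleGraph.is3Clique_triple_iff.mpr ⟨hau, haw, huw⟩)
    · rintro (⟨hu, hw⟩ | ⟨hu, hw⟩)
      · have := hnbr u hu
        rw [← SimpleGraph.mem_neighborFinset, this, Finset.mem_compl]; exact hw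
      · have := hnbr w hw
        exact ((by rw [← SimpleGraph.mem_neighborFinset, this, Finset.mem_compl]; exact hu : G.Adj w u)).symm
  -- build the equivalence
  have cA : Fintype.card {x : V // x ∈ A} = k + 1 := by
    rw [Fintype.card_coe]; exact hA
  have cB : Fintype.card {x : V // x ∉ A} = k := by
    have := Fintype.card_subtype_compl (fun x => x ∈ A)
    rw [this, cA]; omega
  let eA : {x : V // x ∈ A} ≃ Fin (k + 1) := Fintype.equivFinOfCardEq cA
  let eB : {x : V // x ∉ A} ≃ Fin k := Fintype.equivFinOfCardEq cB
  let e : V ≃ (Fin k ⊕ Fin (k + 1)) :=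
    (Equiv.sumCompl (· ∈ A)).symm.trans ((Equiv.sumComm _ _).trans (Equiv.sumCongr eB eA))
  refine ⟨{ toEquiv := e, map_rel_iff' := ?_ }⟩
  intro u w
  rw [hAdj u w]
  show (completeBipartiteGraph _ _).Adj (e u) (e w) ↔ _
  by_cases hu : u ∈ A <;> by_cases hw : w ∈ A <;>
    simp [e, Equiv.sumCompl, hu, hw]
end

section
/- Let r ≥ 4 be an integer. There is no simple triangle-free graph on n = 2r+1 vertices that is r-regular (every vertex has degree exactly r). -/
/-- For `r ≥ 4`, there is no triangle-free `r`-regular graph on `2r+1` vertices. -/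
theorem stmt_4 (r : ℕ) (hr : 4 ≤ r) :
    ¬ ∃ (V : Type) (_ : Fintype V) (G : SimpleGraph V) (_ : DecidableRel G.Adj),
      Fintype.card V = 2 * r + 1 ∧ G.CliqueFree 3 ∧ G.IsRegularOfDegree r := by
  rintro ⟨V, _, G, _, hcard, hfree, hreg⟩
  classical
  have hT : ∀ a b c : V, G.Adj a b → G.Adj a c → G.Adj b c → False := by
    intro a b c hab hac hbc
    exact hfree {a, b, c} (SimpleGraph.is3Clique_triple_iff.2 ⟨hab, hac, hbc⟩)
  have hV : Nonempty V := by
    rw [← Fintype.card_pos_iff, hcard]; omega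
  obtain ⟨x⟩ := hV
  set N : Finset V := G.neighborFinset x with hN
  have hNcard : N.card = r := hreg x
  have hxN : x ∉ N := by simp [hN]
  set M : Finset V := Finset.univ \ insert x N with hM
  have hMcard : M.card = r := by
    have h1 := Finset.card_sdiff_of_subset (Finset.subset_univ (insert x N))
    rw [Finset.card_univ, hcard, Finset.card_insert_of_notMem hxN, hNcard] at h1
    rw [hM, h1]; omega
  have hdisjNM : Disjoint N M := by
    rw [hM]
    exact Finset.disjoint_sdiff.mono_left (Finset.subset_insert x N)
  set b : V → ℕ := fun v => (M.filter (G.Adj v)).card with hb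
  set a : V → ℕ := fun v => (N.filter (G.Adj v)).card with ha
  -- each m ∈ M : a m + b m = r
  have hab : ∀ m ∈ M, a m + b m = r := by
    intro m hm
    have hmx : m ≠ x := by
      intro h; rw [hM, h] at hm; simp at hm
    have hmN : m ∉ N := by
      intro h; rw [hM] at hm; simp [h] at hm
    have hxm : ¬ G.Adj x m := by
      intro h; exact hmN (by simp [hN, h])
    have hunion : N.filter (G.Adj m) ∪ M.filter (G.Adj m) = G.neighborFinset m := by
      ext v
      simp only [Finset.mem_union, Finset.mem_filter, SimpleGraph.mem_neighborFinset]
      constructor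
      · rintro (⟨_, h⟩ | ⟨_, h⟩) <;> exact h
      · intro h
        have hvx : v ≠ x := by
          intro he; subst he; exact hxm h.symm
        by_cases hv : v ∈ N
        · exact Or.inl ⟨hv, h⟩
        · refine Or.inr ⟨?_, h⟩
          rw [hM]; simp [hvx, hv]
    have hdf : Disjoint (N.filter (G.Adj m)) (M.filter (G.Adj m)) :=
      (hdisjNM.mono (Finset.filter_subset _ _) (Finset.filter_subset _ _))
    have := Finset.card_union_of_disjoint hdf
    rw [hunion, G.card_neighborFinset_eq_degree, hreg m] at this
    simp only [ha, hb]; omega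
  -- each y ∈ N : b y + 1 = r
  have hbN : ∀ y ∈ N, b y + 1 = r := by
    intro y hy
    have hxy : G.Adj x y := by rwa [hN, SimpleGraph.mem_neighborFinset] at hy
    have hins : insert x (M.filter (G.Adj y)) = G.neighborFinset y := by
      ext v
      simp only [Finset.mem_insert, Finset.mem_filter, SimpleGraph.mem_neighborFinset]
      constructor
      · rintro (rfl | ⟨_, h⟩)
        · exact hxy.symm
        · exact h
      · intro h
        by_cases hvx : v = x
        · exact Or.inl hvx
        · refine Or.inr ⟨?_, h⟩
          have hvN : v ∉ N := by
            intro hvN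
            exact hT x y v hxy (by rwa [hN, SimpleGraph.mem_neighborFinset] at hvN) h
          rw [hM]; simp [hvx, hvN]
    have hxnM : x ∉ M.filter (G.Adj y) := by
      intro h
      have := (Finset.mem_filter.1 h).1
      rw [hM] at this; simp at this
    have := Finset.card_insert_of_notMem hxnM
    rw [hins, G.card_neighborFinset_eq_degree, hreg y] at this
    simp only [hb]; omega
  -- double counting
  have hswap : ∑ y ∈ N, b y = ∑ m ∈ M, a m := by
    rw [hb, ha]
    simp_rw [Finset.card_filter]
    rw [Finset.sum_comm]
    refine Finset.sum_congr rfl fun m _ => Finset.sum_congr rfl fun y _ => ?_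
    exact if_congr (G.adj_comm y m) rfl rfl
  have hsumN : ∑ y ∈ N, b y = r * r - r := by
    have h1 : ∑ y ∈ N, (b y + 1) = ∑ y ∈ N, r :=
      Finset.sum_congr rfl fun y hy => by rw [hbN y hy]
    rw [Finset.sum_add_distrib, Finset.sum_const, Finset.sum_const, hNcard] at h1
    simp only [smul_eq_mul, mul_one] at h1
    omega
  have hsumM : ∑ m ∈ M, (a m + b m) = r * r := by
    rw [Finset.sum_congr rfl hab, Finset.sum_const, hMcard, smul_eq_mul]
  have hsumb : ∑ m ∈ M, b m = r := by
    rw [Finset.sum_add_distrib, ← hswap, hsumN] at hsumM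
    have hrr : r ≤ r * r := Nat.le_mul_of_pos_left r (by omega)
    omega
  -- find an edge inside M
  have hex : ∃ m ∈ M, b m ≠ 0 := by
    apply Finset.exists_ne_zero_of_sum_ne_zero
    rw [hsumb]; omega
  obtain ⟨m, hmM, hbm⟩ := hex
  obtain ⟨m', hm'⟩ := Finset.card_pos.1 (Nat.pos_of_ne_zero hbm)
  have hm'M : m' ∈ M := (Finset.mem_filter.1 hm').1
  have hmm' : G.Adj m m' := (Finset.mem_filter.1 hm').2
  have hne : m ≠ m' := G.ne_of_adj hmm'
  -- a m + a m' ≤ r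
  have haa : a m + a m' ≤ r := by
    have hdisj : Disjoint (N.filter (G.Adj m)) (N.filter (G.Adj m')) := by
      rw [Finset.disjoint_left]
      intro y hy hy'
      exact hT m m' y hmm' (Finset.mem_filter.1 hy).2 (Finset.mem_filter.1 hy').2
    have h1 := Finset.card_union_of_disjoint hdisj
    have h2 : N.filter (G.Adj m) ∪ N.filter (G.Adj m') ⊆ N :=
      Finset.union_subset (Finset.filter_subset _ _) (Finset.filter_subset _ _)
    have h3 := Finset.card_le_card h2
    rw [h1, hNcard] at h3
    simp only [ha]; omega
  have hbb : r ≤ b m + b m' := by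
    have h1 := hab m hmM
    have h2 := hab m' hm'M
    omega
  -- b m + b m' ≤ r, so equality, and all others are 0
  have hpair : b m + b m' ≤ r := by
    have hsub : ({m, m'} : Finset V) ⊆ M := by
      intro z hz
      rcases Finset.mem_insert.1 hz with rfl | hz
      · exact hmM
      · rw [Finset.mem_singleton.1 hz]; exact hm'M
    have := Finset.sum_le_sum_of_subset (f := b) hsub
    rw [Finset.sum_pair hne, hsumb] at this
    exact this
  have hzero : ∀ z ∈ M, z ≠ m → z ≠ m' → b z = 0 := by
    intro z hzM hzm hzm'
    have hsub : (insert z {m, m'} : Finset V) ⊆ M := by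
      intro w hw
      rcases Finset.mem_insert.1 hw with rfl | hw
      · exact hzM
      · rcases Finset.mem_insert.1 hw with rfl | hw
        · exact hmM
        · rw [Finset.mem_singleton.1 hw]; exact hm'M
    have hznp : z ∉ ({m, m'} : Finset V) := by simp [hzm, hzm']
    have h := Finset.sum_le_sum_of_subset (f := b) hsub
    rw [Finset.sum_insert hznp, Finset.sum_pair hne, hsumb] at h
    omega
  -- final contradiction
  have hfin : ∀ p q : V, p ∈ M → q ∈ M → G.Adj p q →
      (∀ z ∈ M, z ≠ p → z ≠ q → b z = 0) → 2 ≤ b p → False := by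
    intro p q hp hq hpq hz0 h2
    obtain ⟨z, hz, hzq⟩ : ∃ z ∈ M.filter (G.Adj p), z ≠ q := by
      by_contra h
      push_neg at h
      have hsub : M.filter (G.Adj p) ⊆ {q} := fun w hw => Finset.mem_singleton.2 (h w hw)
      have := Finset.card_le_card hsub
      rw [Finset.card_singleton] at this
      simp only [hb] at h2; omega
    have hzM := (Finset.mem_filter.1 hz).1
    have hpz := (Finset.mem_filter.1 hz).2
    have hzp : z ≠ p := fun h => G.irrefl (h ▸ hpz)
    have hbz : b z = 0 := hz0 z hzM hzp hzq
    have hpmem : p ∈ M.filter (G.Adj z) := Finset.mem_filter.2 ⟨hp, hpz.symm⟩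
    have : 0 < b z := Finset.card_pos.2 ⟨p, hpmem⟩
    omega
  rcases Nat.lt_or_ge (b m) 2 with h | h
  · exact hfin m' m hm'M hmM hmm'.symm (fun z hz h1 h2 => hzero z hz h2 h1) (by omega)
  · exact hfin m m' hmM hm'M hmm' hzero h
end

section
/- Let G be a simple triangle-free graph on n vertices with m edges. If m = ⌊n²/4⌋, then G is isomorphic to the complete bipartite graph K_{⌊n/2⌋,⌈n/2⌉}; that is, K_{⌊n/2⌋,⌈n/2⌉} is the unique triangle-free graph on n vertices attaining the Mantel bound ⌊n²/4⌋ on the number of edges. -/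
/-!
By Turán's theorem for `r = 2`, a triangle-free graph with as many edges as the Turán graph
`T(n, 2)` is isomorphic to it, and `T(n, 2)` has `⌊n² / 4⌋` edges. The vertices of `T(n, 2)`
are `0, …, n - 1`, adjacent iff of different parity, so sorting them by parity identifies it
with `K_{⌊n/2⌋,⌈n/2⌉}`: the `⌊n/2⌋` odd ones form one side, the `⌈n/2⌉` even ones the other.
-/

open Finset SimpleGraph

def finParityEquiv (n : ℕ) : Fin n ≃ Fin (n / 2) ⊕ Fin ((n + 1) / 2) where
  toFun v := if h : (v : ℕ) % 2 = 1 then .inl ⟨v / 2, by omega⟩ else .inr ⟨v / 2, by omega⟩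
  invFun
    | .inl k => ⟨2 * k + 1, by omega⟩
    | .inr k => ⟨2 * k, by omega⟩
  left_inv v := by grind [Fin.ext_iff]
  right_inv := by rintro (k | k) <;> grind [Fin.ext_iff]

theorem finParityEquiv_isLeft {n : ℕ} (v : Fin n) :
    (finParityEquiv n v).isLeft ↔ (v : ℕ) % 2 = 1 := by
  grind [finParityEquiv]

namespace SimpleGraph

variable {V : Type*} [Fintype V] {G : SimpleGraph V} [DecidableRel G.Adj] {r : ℕ}

theorem isTuranMaximal_of_card_edgeFinset_turanGraph_le (hr : 0 < r) (hG : G.CliqueFree (r + 1))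
    (hcard : #(turanGraph (Fintype.card V) r).edgeFinset ≤ #G.edgeFinset) :
    G.IsTuranMaximal r := by
  obtain ⟨J, _, hJ⟩ := exists_isTuranMaximal (V := V) hr
  obtain ⟨f⟩ := hJ.nonempty_iso_turanGraph
  refine ⟨hG, fun H _ hH ↦ ?_⟩
  calc #H.edgeFinset ≤ #J.edgeFinset := hJ.2 hH
    _ = #(turanGraph _ r).edgeFinset := f.card_edgeFinset_eq
    _ ≤ #G.edgeFinset := hcard

theorem card_edgeFinset_turanGraph_two (n : ℕ) : #(turanGraph n 2).edgeFinset = n ^ 2 / 4 := by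
  rw [card_edgeFinset_turanGraph]
  rcases Nat.even_or_odd' n with ⟨k, rfl | rfl⟩
  · simp
  · rw [Nat.mul_add_mod_self_left, Nat.one_mod, Nat.choose_eq_zero_of_lt one_lt_two]
    ring_nf
    omega

def turanGraphTwoIsoCompleteBipartiteGraph (n : ℕ) :
    turanGraph n 2 ≃g completeBipartiteGraph (Fin (n / 2)) (Fin ((n + 1) / 2)) where
  toEquiv := finParityEquiv n
  map_rel_iff' {v w} := by
    have hv := finParityEquiv_isLeft v
    have hw := finParityEquiv_isLeft w
    simp only [completeBipartiteGraph_adj, turanGraph_adj, ← Sum.not_isLeft]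
    grind

end SimpleGraph

theorem stmt_6_general {V : Type*} [Fintype V]
    (G : SimpleGraph V) [DecidableRel G.Adj]
    (htf : G.CliqueFree 3)
    (hm : G.edgeFinset.card = Fintype.card V ^ 2 / 4) :
    Nonempty (G ≃g completeBipartiteGraph
      (Fin (Fintype.card V / 2)) (Fin ((Fintype.card V + 1) / 2))) := by
  have hmax : G.IsTuranMaximal 2 :=
    isTuranMaximal_of_card_edgeFinset_turanGraph_le two_pos htf
      (by rw [card_edgeFinset_turanGraph_two, hm])
  obtain ⟨f⟩ := (isTuranMaximal_iff_nonempty_iso_turanGraph two_pos).1 hmax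
  exact ⟨f.trans (turanGraphTwoIsoCompleteBipartiteGraph _)⟩

/-- A triangle-free graph on `n` vertices with `⌊n²/4⌋` edges is isomorphic to the
complete bipartite graph `K_{⌊n/2⌋,⌈n/2⌉}`: the extremal graph in Mantel's theorem
is unique. -/
theorem stmt_6 {V : Type*} [Fintype V] [DecidableEq V]
    (G : SimpleGraph V) [DecidableRel G.Adj]
    (htf : G.CliqueFree 3)
    (hm : G.edgeFinset.card = Fintype.card V ^ 2 / 4) :
    Nonempty (G ≃g completeBipartiteGraph
      (Fin (Fintype.card V / 2)) (Fin ((Fintype.card V + 1) / 2))) :=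
  stmt_6_general G htf hm
end

section
/- (Andrásfai–Erdős–Sós) Let G be a simple triangle-free graph on n vertices with minimum degree δ(G) > 2n/5. Then G is bipartite. -/
open SimpleGraph Finset

namespace AESaux

/-- Subwalk between positions `i ≤ j` of a walk. -/
lemma subwalk {V : Type*} {G : SimpleGraph V} :
    ∀ {u v : V} (w : G.Walk u v) (i j : ℕ), i ≤ j → j ≤ w.length →
      ∃ p : G.Walk (w.getVert i) (w.getVert j), p.length = j - i := by
  intro u v w
  induction w with
  | nil =>
    intro i j hij hj
    simp only [Walk.length_nil, Nat.le_zero] at hj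
    subst hj
    interval_cases i
    exact ⟨Walk.nil, rfl⟩
  | cons h w ih =>
    intro i j hij hj
    rcases i with _ | i
    · rcases j with _ | j
      · exact ⟨Walk.nil, rfl⟩
      · obtain ⟨p, hp⟩ := ih 0 j (Nat.zero_le _) (by simpa using hj)
        refine ⟨(Walk.cons h (p.copy (Walk.getVert_zero w) rfl)).copy
          (Walk.getVert_zero _).symm (Walk.getVert_cons_succ w h).symm, ?_⟩
        simp only [Walk.length_copy, Walk.length_cons, hp]
        omega
    · rcases j with _ | j
      · omega
      · obtain ⟨p, hp⟩ := ih i j (by omega) (by simpa using hj)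
        refine ⟨p.copy (Walk.getVert_cons_succ w h).symm (Walk.getVert_cons_succ w h).symm, ?_⟩
        simp only [Walk.length_copy, hp]
        omega

/-- A graph with no odd closed walk is 2-colorable. -/
lemma colorable_of_no_odd_closed_walk {V : Type*} (G : SimpleGraph V)
    (h : ∀ (v : V) (w : G.Walk v v), w.length % 2 = 0) : G.Colorable 2 := by
  classical
  have hcard : Fintype.card Bool = 2 := by simp
  rw [← hcard]
  refine (SimpleGraph.Coloring.mk
    (fun v => decide (G.dist ((G.connectedComponentMk v).out) v % 2 = 1)) ?_).colorable
  intro a b hab hc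
  rw [decide_eq_decide] at hc
  have hcomp : G.connectedComponentMk a = G.connectedComponentMk b :=
    SimpleGraph.ConnectedComponent.sound hab.reachable
  set r := (G.connectedComponentMk a).out with hr
  have hra : G.Reachable r a := by
    have := (G.connectedComponentMk a).out_eq
    exact (SimpleGraph.ConnectedComponent.exact this)
  have hout : Quot.out (G.connectedComponentMk b) = r := by rw [hr, hcomp]
  rw [hout] at hc
  have hrb : G.Reachable r b := by
    have h2 := (G.connectedComponentMk b).out_eq
    rw [hout] at h2
    exact (SimpleGraph.ConnectedComponent.exact h2)
  obtain ⟨p, hp⟩ := hra.exists_walk_length_eq_dist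
  obtain ⟨q, hq⟩ := hrb.exists_walk_length_eq_dist
  have hw := h r (p.append ((Walk.cons hab Walk.nil).append q.reverse))
  simp only [Walk.length_append, Walk.length_cons, Walk.length_nil, Walk.length_reverse,
    hp, hq] at hw
  omega

end AESaux

namespace AESaux

lemma arc {V : Type*} {G : SimpleGraph V} {v0 : V} (w : G.Walk v0 v0) {ℓ : ℕ}
    (hlen : w.length = ℓ) (hodd : ℓ % 2 = 1) (hl5 : 5 ≤ ℓ)
    (hmin : ∀ (x : V) (q : G.Walk x x), q.length % 2 = 1 → ℓ ≤ q.length)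
    {u : V} {i j k : ℕ} (hij : i < j) (hjk : j < k) (hk : k < ℓ)
    (hx : G.Adj u (w.getVert i)) (hy : G.Adj u (w.getVert j))
    (hz : G.Adj u (w.getVert k)) : False := by
  have hend : w.getVert ℓ = v0 := by rw [← hlen]; exact w.getVert_length
  obtain ⟨p1, hp1⟩ := AESaux.subwalk w i j (le_of_lt hij) (by omega)
  obtain ⟨p2, hp2⟩ := AESaux.subwalk w j k (le_of_lt hjk) (by omega)
  obtain ⟨p3, hp3⟩ := AESaux.subwalk w k ℓ (le_of_lt hk) (by omega)
  obtain ⟨p0, hp0⟩ := AESaux.subwalk w 0 i (Nat.zero_le _) (by omega)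
  have key : ∀ {x y : V}, G.Adj u x → G.Adj u y → ∀ p : G.Walk x y,
      p.length % 2 = 1 → ℓ ≤ p.length + 2 := by
    intro x y hux huy p hp
    have h2 := hmin u (Walk.cons hux (p.append (Walk.cons huy.symm Walk.nil)))
      (by simp only [Walk.length_cons, Walk.length_append, Walk.length_nil]; omega)
    simp only [Walk.length_cons, Walk.length_append, Walk.length_nil] at h2
    omega
  have ha : (j - i) % 2 = 0 ∨ ℓ ≤ (j - i) + 2 := by
    rcases Nat.mod_two_eq_zero_or_one (j - i) with h | h
    · exact Or.inl h
    · exact Or.inr (by have := key hx hy p1 (by omega); omega)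
  have hb : (k - j) % 2 = 0 ∨ ℓ ≤ (k - j) + 2 := by
    rcases Nat.mod_two_eq_zero_or_one (k - j) with h | h
    · exact Or.inl h
    · exact Or.inr (by have := key hy hz p2 (by omega); omega)
  have hc : (ℓ - k + i) % 2 = 0 ∨ ℓ ≤ (ℓ - k + i) + 2 := by
    rcases Nat.mod_two_eq_zero_or_one (ℓ - k + i) with h | h
    · exact Or.inl h
    · refine Or.inr ?_
      have hq := key hz hx
        ((p3.copy rfl hend).append (p0.copy (Walk.getVert_zero w) rfl))
        (by simp only [Walk.length_append, Walk.length_copy, hp3, hp0]; omega)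
      simp only [Walk.length_append, Walk.length_copy, hp3, hp0] at hq
      omega
  omega

end AESaux

/-- Andrásfai–Erdős–Sós: a triangle-free graph on `n` vertices with minimum degree
greater than `2n/5` is bipartite. -/
theorem stmt_7 {V : Type*} [Fintype V] [DecidableEq V]
    (G : SimpleGraph V) [DecidableRel G.Adj]
    (htf : G.CliqueFree 3)
    (hdeg : ∀ v : V, 2 * (Fintype.card V : ℝ) / 5 < G.degree v) :
    G.Colorable 2 := by
  classical
  by_contra hcol
  have hex : ∃ n : ℕ, n % 2 = 1 ∧ ∃ v : V, ∃ w : G.Walk v v, w.length = n := by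
    by_contra hno
    push_neg at hno
    refine hcol (AESaux.colorable_of_no_odd_closed_walk G fun v w => ?_)
    rcases Nat.mod_two_eq_zero_or_one w.length with h | h
    · exact h
    · exact absurd rfl (hno w.length h v w)
  obtain ⟨hodd0, v0, w, hlen⟩ := Nat.find_spec hex
  have hodd : w.length % 2 = 1 := by rw [hlen]; exact hodd0
  have hminN : ∀ m, m < w.length →
      ¬(m % 2 = 1 ∧ ∃ v : V, ∃ q : G.Walk v v, q.length = m) := by
    intro m hm
    rw [hlen] at hm
    exact Nat.find_min hex hm
  have hmin : ∀ (x : V) (q : G.Walk x x), q.length % 2 = 1 → w.length ≤ q.length := by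
    intro x q hq
    by_contra hlt
    push_neg at hlt
    exact hminN _ hlt ⟨hq, x, q, rfl⟩
  have hend : w.getVert w.length = v0 := w.getVert_length
  -- length ≥ 5
  have hl5 : 5 ≤ w.length := by
    by_contra hlt
    push_neg at hlt
    have : w.length = 1 ∨ w.length = 3 := by omega
    rcases this with h1 | h3
    · have hadj : G.Adj (w.getVert 0) (w.getVert 1) := w.adj_getVert_succ (by omega)
      have he1 : w.getVert 1 = v0 := by rw [← h1]; exact hend
      rw [Walk.getVert_zero, he1] at hadj
      exact G.irrefl hadj
    · have h01 : G.Adj (w.getVert 0) (w.getVert 1) := w.adj_getVert_succ (by omega)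
      have h12 : G.Adj (w.getVert 1) (w.getVert 2) := w.adj_getVert_succ (by omega)
      have h23 : G.Adj (w.getVert 2) (w.getVert 3) := w.adj_getVert_succ (by omega)
      have he3 : w.getVert 3 = v0 := by rw [← h3]; exact hend
      rw [Walk.getVert_zero] at h01
      rw [he3] at h23
      exact htf {v0, w.getVert 1, w.getVert 2}
        (SimpleGraph.is3Clique_triple_iff.2 ⟨h01, h23.symm, h12⟩)
  -- injectivity of positions
  have hinj : ∀ i j : ℕ, i < j → j < w.length → w.getVert i ≠ w.getVert j := by
    intro i j hij hj hEq
    obtain ⟨p1, hp1⟩ := AESaux.subwalk w i j (le_of_lt hij) (by omega)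
    obtain ⟨p0, hp0⟩ := AESaux.subwalk w 0 i (Nat.zero_le _) (by omega)
    obtain ⟨p3, hp3⟩ := AESaux.subwalk w j w.length (le_of_lt hj) le_rfl
    rcases Nat.mod_two_eq_zero_or_one (j - i) with h | h
    · exact hminN (i + (w.length - j)) (by omega) ⟨by omega, v0,
        (p0.copy (Walk.getVert_zero w) rfl).append (p3.copy hEq.symm hend),
        by simp only [Walk.length_append, Walk.length_copy, hp0, hp3]; omega⟩
    · exact hminN (j - i) (by omega) ⟨h, w.getVert i, p1.copy rfl hEq.symm,
        by simp only [Walk.length_copy, hp1]⟩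
  -- the cycle vertex set
  set S : Finset V := (Finset.range w.length).image (fun i => w.getVert i) with hSdef
  have hScard : S.card = w.length := by
    rw [hSdef, Finset.card_image_of_injOn, Finset.card_range]
    intro i hi j hj hEq
    simp only [Finset.coe_range, Set.mem_Iio] at hi hj
    rcases lt_trichotomy i j with h | h | h
    · exact absurd hEq (hinj i j h hj)
    · exact h
    · exact absurd hEq.symm (hinj j i h hi)
  -- every vertex has at most 2 neighbours in S
  have hdeg2 : ∀ u : V, (S.filter (fun x => G.Adj u x)).card ≤ 2 := by
    intro u
    by_contra hgt
    push_neg at hgt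
    obtain ⟨a, b, c, ha, hb, hc, hab, hac, hbc⟩ := Finset.two_lt_card_iff.1 hgt
    simp only [Finset.mem_filter, hSdef, Finset.mem_image, Finset.mem_range] at ha hb hc
    obtain ⟨⟨ia, hia, hva⟩, hua⟩ := ha
    obtain ⟨⟨ib, hib, hvb⟩, hub⟩ := hb
    obtain ⟨⟨ic, hic, hvc⟩, huc⟩ := hc
    rw [← hva] at hua hab hac
    rw [← hvb] at hub hab hbc
    rw [← hvc] at huc hac hbc
    have key : ∀ i j k : ℕ, G.Adj u (w.getVert i) → G.Adj u (w.getVert j) →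
        G.Adj u (w.getVert k) → i < j → j < k → k < w.length → False :=
      fun i j k h1 h2 h3 hij hjk hkl => AESaux.arc w rfl hodd hl5 hmin hij hjk hkl h1 h2 h3
    have hab' : ia ≠ ib := fun h => hab (by rw [h])
    have hac' : ia ≠ ic := fun h => hac (by rw [h])
    have hbc' : ib ≠ ic := fun h => hbc (by rw [h])
    rcases lt_trichotomy ia ib with h1 | h1 | h1
    · rcases lt_trichotomy ib ic with h2 | h2 | h2
      · exact key ia ib ic hua hub huc h1 h2 hic
      · exact hbc' h2
      · rcases lt_trichotomy ia ic with h3 | h3 | h3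
        · exact key ia ic ib hua huc hub h3 h2 hib
        · exact hac' h3
        · exact key ic ia ib huc hua hub h3 h1 hib
    · exact hab' h1
    · rcases lt_trichotomy ia ic with h2 | h2 | h2
      · exact key ib ia ic hub hua huc h1 h2 hic
      · exact hac' h2
      · rcases lt_trichotomy ib ic with h3 | h3 | h3
        · exact key ib ic ia hub huc hua h3 h2 hia
        · exact hbc' h3
        · exact key ic ib ia huc hub hua h3 h1 hia
  -- counting
  have hsum_nat : ∑ v ∈ S, G.degree v ≤ 2 * Fintype.card V := by
    calc ∑ v ∈ S, G.degree v
        = ∑ v ∈ S, ∑ u : V, if G.Adj v u then 1 else 0 := by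
          refine Finset.sum_congr rfl fun v _ => ?_
          rw [← SimpleGraph.card_neighborFinset_eq_degree,
            SimpleGraph.neighborFinset_eq_filter, Finset.card_filter]
      _ = ∑ u : V, ∑ v ∈ S, if G.Adj v u then 1 else 0 := Finset.sum_comm
      _ = ∑ u : V, (S.filter (fun v => G.Adj u v)).card := by
          refine Finset.sum_congr rfl fun u _ => ?_
          rw [Finset.card_filter]
          refine Finset.sum_congr rfl fun v _ => ?_
          simp only [show G.Adj v u ↔ G.Adj u v from G.adj_comm v u]
      _ ≤ ∑ _u : V, 2 := Finset.sum_le_sum fun u _ => hdeg2 u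
      _ = 2 * Fintype.card V := by
          simp [Finset.sum_const, Finset.card_univ, mul_comm]
  have hSne : S.Nonempty := by rw [← Finset.card_pos, hScard]; omega
  have hlow : 2 * (Fintype.card V : ℝ) < ∑ v ∈ S, (G.degree v : ℝ) := by
    have h1 : ∑ _v ∈ S, (2 * (Fintype.card V : ℝ) / 5) < ∑ v ∈ S, (G.degree v : ℝ) :=
      Finset.sum_lt_sum_of_nonempty hSne fun v _ => hdeg v
    rw [Finset.sum_const, hScard, nsmul_eq_mul] at h1
    have hc0 : (0 : ℝ) ≤ (Fintype.card V : ℝ) := Nat.cast_nonneg _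
    have hl : (5 : ℝ) ≤ (w.length : ℝ) := by exact_mod_cast hl5
    nlinarith
  have hhigh : ∑ v ∈ S, (G.degree v : ℝ) ≤ 2 * (Fintype.card V : ℝ) := by
    exact_mod_cast hsum_nat
  linarith
end
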